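/- Let n ≥ 1 be an integer, let u ∈ {0,1}, and let ζ = exp(πi/n) ∈ ℂ. Then −(1/2)·( (1/(2n)) Σ_{j=1}^{2n−1} ζ^{−j}/(1−ζ^{−j})² − (1/2)(−1)^u ) + (1/8)·(1/(4n))·( Σ_{j=1}^{2n−1} (1+ζ^{−j})(1+ζ^{j})/((1−ζ^{−j})(1−ζ^{j})) + 2n ) = (n + 2(−1)^u)/8 (an equality of complex numbers, the right-hand side being a rational number viewed in ℂ). -/

import Mathlib

/-!
Write `m = 2n`, so that `ζ` is a primitive `m`-th root of unity. On the `m`-th roots of unity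
`x ≠ 1` the function `x / (1 - x)²` agrees with the polynomial `(2m)⁻¹ ∑_{k<m} (mk - k²) xᵏ`;
summing over `x = ζʲ` and using that every nontrivial power sum `∑_{j=1}^{m-1} ζ^{jk}` is `-1`
gives `∑_{j=1}^{m-1} ζʲ / (1 - ζʲ)² = (1 - m²) / 12`, also for `ζ⁻¹`. The second sum is
`-4` times the same sum minus `m - 1`, and the rest is arithmetic.
-/

open Finset

theorem sum_range_eq_add_sum_Icc {M : Type*} [AddCommMonoid M] (f : ℕ → M) {m : ℕ}
    (hm : 0 < m) : ∑ j ∈ range m, f j = f 0 + ∑ j ∈ Icc 1 (m - 1), f j := by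
  rw [range_eq_Ico, sum_eq_sum_Ico_succ_bot hm,
    Icc_sub_one_right_eq_Ico_of_not_isMin (by simpa using hm.ne')]

section CommRing

variable {R : Type*} [CommRing R]

theorem two_mul_sum_range_natCast (N : ℕ) : 2 * ∑ k ∈ range N, (k : R) = N * (N - 1) := by
  induction N with
  | zero => simp
  | succ N ih => rw [sum_range_succ, mul_add, ih]; push_cast; ring

theorem six_mul_sum_range_natCast_sq (N : ℕ) :
    6 * ∑ k ∈ range N, (k : R) ^ 2 = N * (N - 1) * (2 * N - 1) := by
  induction N with
  | zero => simp
  | succ N ih => rw [sum_range_succ, mul_add, ih]; push_cast; ring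

theorem sub_one_mul_sum_range_natCast_mul_pow (x : R) (N : ℕ) :
    (x - 1) * ∑ k ∈ range N, (k : R) * x ^ k = (N - 1) * x ^ N + 1 - ∑ k ∈ range N, x ^ k := by
  induction N with
  | zero => simp
  | succ N ih =>
    rw [sum_range_succ, sum_range_succ (fun k => x ^ k)]
    push_cast
    linear_combination ih

theorem sub_one_mul_sum_range_natCast_sq_mul_pow (x : R) (N : ℕ) :
    (x - 1) * ∑ k ∈ range N, (k : R) ^ 2 * x ^ k =
      (N - 1) ^ 2 * x ^ N - 2 * ∑ k ∈ range N, (k : R) * x ^ k + ∑ k ∈ range N, x ^ k - 1 := by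
  induction N with
  | zero => simp
  | succ N ih =>
    rw [sum_range_succ, sum_range_succ (fun k => (k : R) * x ^ k),
      sum_range_succ (fun k => x ^ k)]
    push_cast
    linear_combination ih

end CommRing

section Field

variable {K : Type*} [Field K]

theorem sum_Icc_pow_eq_neg_one_of_pow_eq_one {w : K} {m : ℕ} (hm : 0 < m) (hw : w ^ m = 1)
    (hw1 : w ≠ 1) : ∑ j ∈ Icc 1 (m - 1), w ^ j = -1 := by
  have h := geom_sum_eq hw1 m
  rw [hw, sub_self, zero_div, sum_range_eq_add_sum_Icc _ hm, pow_zero] at h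
  linear_combination h

theorem one_add_inv_mul_one_add_div_eq {a : K} (h0 : a ≠ 0) (h1 : a ≠ 1) :
    (1 + a⁻¹) * (1 + a) / ((1 - a⁻¹) * (1 - a)) = -4 * (a / (1 - a) ^ 2) - 1 := by
  have h1' : 1 - a ≠ 0 := sub_ne_zero.mpr h1.symm
  field_simp
  ring

variable [CharZero K]

theorem div_one_sub_sq_eq_sum_of_pow_eq_one {x : K} {m : ℕ} (hm : 0 < m) (hx : x ^ m = 1)
    (hx1 : x ≠ 1) :
    x / (1 - x) ^ 2 = (2 * m : K)⁻¹ * ∑ k ∈ range m, ((m : K) * k - (k : K) ^ 2) * x ^ k := by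
  have hgeom : ∑ k ∈ range m, x ^ k = 0 := by rw [geom_sum_eq hx1, hx, sub_self, zero_div]
  have hA := sub_one_mul_sum_range_natCast_mul_pow x m
  have hB := sub_one_mul_sum_range_natCast_sq_mul_pow x m
  rw [hx, hgeom] at hA hB
  have hsplit : ∑ k ∈ range m, ((m : K) * k - (k : K) ^ 2) * x ^ k =
      m * ∑ k ∈ range m, (k : K) * x ^ k - ∑ k ∈ range m, (k : K) ^ 2 * x ^ k := by
    rw [mul_sum, ← sum_sub_distrib]
    exact sum_congr rfl fun k _ => by ring
  have hm0 : (m : K) ≠ 0 := Nat.cast_ne_zero.mpr hm.ne'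
  have hx1' : 1 - x ≠ 0 := sub_ne_zero.mpr hx1.symm
  rw [hsplit]
  field_simp
  linear_combination (-(m : K) * (x - 1) - 2) * hA + (x - 1) * hB

namespace IsPrimitiveRoot

variable {ζ : K} {m : ℕ}

theorem sum_pow_div_one_sub_pow_sq (hζ : IsPrimitiveRoot ζ m) (hm : 0 < m) :
    ∑ j ∈ Icc 1 (m - 1), ζ ^ j / (1 - ζ ^ j) ^ 2 = (1 - (m : K) ^ 2) / 12 := by
  have hroot (j : ℕ) : (ζ ^ j) ^ m = 1 := by rw [pow_right_comm, hζ.pow_eq_one, one_pow]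
  have hpoint : ∀ j ∈ Icc 1 (m - 1), ζ ^ j / (1 - ζ ^ j) ^ 2 =
      (2 * m : K)⁻¹ * ∑ k ∈ range m, ((m : K) * k - (k : K) ^ 2) * (ζ ^ j) ^ k := by
    intro j hj
    rw [mem_Icc] at hj
    exact div_one_sub_sq_eq_sum_of_pow_eq_one hm (hroot j)
      (hζ.pow_ne_one_of_pos_of_lt (by omega) (by omega))
  have hpowsum : ∀ k ∈ range m, ∑ j ∈ Icc 1 (m - 1), ((m : K) * k - (k : K) ^ 2) * (ζ ^ j) ^ k =
      -((m : K) * k - (k : K) ^ 2) := by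
    intro k hk
    simp_rw [← pow_mul, mul_comm _ k, pow_mul, ← mul_sum]
    rcases Nat.eq_zero_or_pos k with rfl | hk0
    · simp
    · rw [sum_Icc_pow_eq_neg_one_of_pow_eq_one hm (hroot k)
        (hζ.pow_ne_one_of_pos_of_lt hk0.ne' (mem_range.mp hk)), mul_neg_one]
  have hcoeff : ∑ k ∈ range m, ((m : K) * k - (k : K) ^ 2) = m * (m ^ 2 - 1) / 6 := by
    rw [sum_sub_distrib, ← mul_sum]
    linear_combination ((m : K) / 2) * two_mul_sum_range_natCast (R := K) m -
      six_mul_sum_range_natCast_sq (R := K) m / 6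
  rw [sum_congr rfl hpoint, ← mul_sum, sum_comm, sum_congr rfl hpowsum, sum_neg_distrib, hcoeff]
  have hm0 : (m : K) ≠ 0 := Nat.cast_ne_zero.mpr hm.ne'
  field_simp
  ring

/-- For `ζ = exp (2πi / m)` the summand is `cot² (πj / m)`. -/
theorem sum_cot_sq (hζ : IsPrimitiveRoot ζ m) (hm : 0 < m) :
    ∑ j ∈ Icc 1 (m - 1), (1 + (ζ ^ j)⁻¹) * (1 + ζ ^ j) / ((1 - (ζ ^ j)⁻¹) * (1 - ζ ^ j)) =
      ((m : K) - 1) * (m - 2) / 3 := by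
  have hterm : ∀ j ∈ Icc 1 (m - 1), (1 + (ζ ^ j)⁻¹) * (1 + ζ ^ j) / ((1 - (ζ ^ j)⁻¹) * (1 - ζ ^ j))
      = -4 * (ζ ^ j / (1 - ζ ^ j) ^ 2) - 1 := by
    intro j hj
    rw [mem_Icc] at hj
    exact one_add_inv_mul_one_add_div_eq (pow_ne_zero _ (hζ.ne_zero hm.ne'))
      (hζ.pow_ne_one_of_pos_of_lt (by omega) (by omega))
  rw [sum_congr rfl hterm, sum_sub_distrib, ← mul_sum, hζ.sum_pow_div_one_sub_pow_sq hm,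
    sum_const, Nat.card_Icc, Nat.add_sub_cancel, nsmul_one, Nat.cast_pred hm]
  ring

end IsPrimitiveRoot

end Field

theorem Complex.isPrimitiveRoot_exp_pi_mul_I_div {n : ℕ} (hn : n ≠ 0) :
    IsPrimitiveRoot (exp (Real.pi * I / n)) (2 * n) := by
  convert isPrimitiveRoot_exp (2 * n) (by positivity) using 2
  push_cast
  field_simp

theorem delta_prism_v0_general (n : ℕ) (hn : 1 ≤ n) (u : ℕ) (ζ : ℂ)
    (hζ : ζ = Complex.exp (Real.pi * Complex.I / n)) :
    -(1 / 2) *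
        ((1 / (2 * (n : ℂ))) *
            (∑ j ∈ Finset.Icc 1 (2 * n - 1), ζ ^ (-(j : ℤ)) / (1 - ζ ^ (-(j : ℤ))) ^ 2) -
          (1 / 2) * (-1 : ℂ) ^ u) +
      (1 / 8) * (1 / (4 * (n : ℂ))) *
        ((∑ j ∈ Finset.Icc 1 (2 * n - 1),
          (1 + ζ ^ (-(j : ℤ))) * (1 + ζ ^ (j : ℤ)) /
            ((1 - ζ ^ (-(j : ℤ))) * (1 - ζ ^ (j : ℤ)))) + 2 * (n : ℂ)) =
      ((n : ℂ) + 2 * (-1 : ℂ) ^ u) / 8 := by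
  have hm : 0 < 2 * n := by omega
  have hprim : IsPrimitiveRoot ζ (2 * n) := hζ ▸ Complex.isPrimitiveRoot_exp_pi_mul_I_div (by omega)
  have hfirst := hprim.inv.sum_pow_div_one_sub_pow_sq hm
  simp only [inv_pow] at hfirst
  simp only [zpow_neg, zpow_natCast]
  rw [hfirst, hprim.sum_cot_sq hm]
  have hn0 : (n : ℂ) ≠ 0 := Nat.cast_ne_zero.mpr (by omega)
  push_cast
  field_simp
  ring

/-- For `n ≥ 1`, `u ∈ {0,1}` and `ζ = exp(πi/n)`:
`-(1/2)((1/(2n)) ∑_{j=1}^{2n-1} ζ^{-j}/(1-ζ^{-j})² - (1/2)(-1)^u)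
  + (1/8)(1/(4n))(∑_{j=1}^{2n-1} (1+ζ^{-j})(1+ζ^{j})/((1-ζ^{-j})(1-ζ^{j})) + 2n)
  = (n + 2(-1)^u)/8`, i.e. `δ(Y(n), s_{u,0}) = (n + 2(-1)^u)/8`. -/
theorem delta_prism_v0 (n : ℕ) (hn : 1 ≤ n) (u : ℕ) (hu : u ≤ 1) (ζ : ℂ)
    (hζ : ζ = Complex.exp (Real.pi * Complex.I / n)) :
    -(1 / 2) *
        ((1 / (2 * (n : ℂ))) *
            (∑ j ∈ Finset.Icc 1 (2 * n - 1), ζ ^ (-(j : ℤ)) / (1 - ζ ^ (-(j : ℤ))) ^ 2) -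
          (1 / 2) * (-1 : ℂ) ^ u) +
      (1 / 8) * (1 / (4 * (n : ℂ))) *
        ((∑ j ∈ Finset.Icc 1 (2 * n - 1),
          (1 + ζ ^ (-(j : ℤ))) * (1 + ζ ^ (j : ℤ)) /
            ((1 - ζ ^ (-(j : ℤ))) * (1 - ζ ^ (j : ℤ)))) + 2 * (n : ℂ)) =
      ((n : ℂ) + 2 * (-1 : ℂ) ^ u) / 8 :=
  delta_prism_v0_general n hn u ζ hζ
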